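/- arXiv:1607.01700 — 2 statements merged into one kernel-verified Lean document; each statement's English description precedes it below -/
import Mathlib

section
/- Let 𝔄 be a compact topological space and let (g_{α,τ})_{α∈𝔄, τ∈ℝ} be a family of orientation-preserving circle homeomorphisms such that (α,τ,x) ↦ g_{α,τ}(x) is continuous, with lifts G_{α,τ} : ℝ → ℝ such that (α,τ,x) ↦ G_{α,τ}(x) is continuous and strictly increasing in τ for each fixed (α,x) (twist condition), and such that for every (α,x) one has G_{α,τ}(x) → +∞ as τ → +∞ and G_{α,τ}(x) → −∞ as τ → −∞. Then for every ρ ∈ ℝ there exist continuous functions τ_ρ⁻, τ_ρ⁺ : 𝔄 → ℝ such that {(α,τ) ∈ 𝔄 × ℝ : ρ(G_{α,τ}) = ρ} = {(α,τ) ∈ 𝔄 × ℝ : τ_ρ⁻(α) ≤ τ ≤ τ_ρ⁺(α)}. -/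
/-!
Write `ρ(α, τ)` for the rotation number of `G_{α,τ}`. It is jointly continuous, nondecreasing
in `τ` and tends to `±∞`, so each fibre `{τ | ρ(α, τ) = ρ₀}` is a nonempty closed interval.
A boundary `t α` of these intervals is continuous as soon as it is the only sign change of a
jointly continuous `φ(α, τ)` that is monotone in `τ`: then `{α | c < t α}` and `{α | t α < c}`
are the open sets `{α | φ(α, c) < 0}` and `{α | 0 < φ(α, c)}`.

For irrational `ρ₀` take `φ = ρ - ρ₀`. For `s < t` the twist condition gives a uniform gap
`G_{α,s} + ε ≤ G_{α,t}`. If both had rotation number `ρ₀`, pick `k` with `k ρ₀` within `ε` of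
an integer `j` (Dirichlet): at a point that one of the two `k`-th iterates moves by exactly
`k ρ₀`, the other one moves it past `j`, which puts its rotation number on the wrong side of
`j / k ≠ ρ₀`.

For `ρ₀ = m / q`, `ρ ≤ ρ₀` iff `min_x (G^q x - x) ≤ m` and `ρ₀ ≤ ρ` iff `m ≤ max_x (G^q x - x)`.
Both extrema are continuous and strictly increasing in `τ`, so `φ = min - m` gives the upper and
`φ = max - m` the lower boundary.
-/

open Filter Topology

noncomputable section

/-- The lift `G : ℝ → ℝ` of an orientation-preserving circle homeomorphism has rotation
number `r`: `ρ(G) = lim_{n→∞} (Gⁿ(x) - x)/n` (for every — equivalently, some — `x`). -/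
def HasRotNum (G : ℝ → ℝ) (r : ℝ) : Prop :=
  ∀ x : ℝ, Tendsto (fun n : ℕ => (G^[n] x - x) / (n : ℝ)) atTop (𝓝 r)

open Set Function

theorem Real.exists_nat_abs_mul_sub_round_lt (ξ : ℝ) {ε : ℝ} (hε : 0 < ε) :
    ∃ k : ℕ, 0 < k ∧ |k * ξ - round (k * ξ)| < ε := by
  obtain ⟨n, hn⟩ := exists_nat_one_div_lt hε
  obtain ⟨k, hk, -, hkξ⟩ := Real.exists_nat_abs_mul_sub_round_le ξ n.succ_pos
  refine ⟨k, hk, hkξ.trans_lt (lt_of_le_of_lt ?_ hn)⟩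
  gcongr
  linarith

theorem Monotone.exists_nonpos_iff_le {φ : ℝ → ℝ} (hφ : Continuous φ) (hmono : Monotone φ)
    (hzero : ∀ s t, φ s = 0 → φ t = 0 → s = t) (hle : ∃ a, φ a ≤ 0) (hge : ∃ b, 0 ≤ φ b) :
    ∃ t, ∀ τ, (φ τ ≤ 0 ↔ τ ≤ t) ∧ (0 ≤ φ τ ↔ t ≤ τ) := by
  obtain ⟨a, ha⟩ := hle
  obtain ⟨b, hb⟩ := hge
  obtain ⟨t, ht⟩ := intermediate_value_univ a b hφ ⟨ha, hb⟩
  refine ⟨t, fun τ => ⟨⟨fun h => ?_, fun h => ht ▸ hmono h⟩, ⟨fun h => ?_, fun h => ht ▸ hmono h⟩⟩⟩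
  · by_contra! hτ
    exact hτ.ne (hzero _ _ ht (le_antisymm h (ht ▸ hmono hτ.le)))
  · by_contra! hτ
    exact hτ.ne (hzero _ _ (le_antisymm (ht ▸ hmono hτ.le) h) ht)

theorem exists_continuous_nonpos_iff_le {X : Type*} [TopologicalSpace X] {φ : X → ℝ → ℝ}
    (hφ : Continuous (uncurry φ)) (hmono : ∀ α, Monotone (φ α))
    (hzero : ∀ α s t, φ α s = 0 → φ α t = 0 → s = t)
    (hle : ∀ α, ∃ a, φ α a ≤ 0) (hge : ∀ α, ∃ b, 0 ≤ φ α b) :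
    ∃ t : X → ℝ, Continuous t ∧ ∀ α τ, (φ α τ ≤ 0 ↔ τ ≤ t α) ∧ (0 ≤ φ α τ ↔ t α ≤ τ) := by
  choose t ht using fun α => (hmono α).exists_nonpos_iff_le (φ := φ α)
    (hφ.comp (.prodMk_right α)) (hzero α) (hle α) (hge α)
  refine ⟨t, continuous_iff_lower_upperSemicontinuous.2 ⟨?_, ?_⟩, ht⟩
  · refine lowerSemicontinuous_iff_isOpen_preimage.2 fun c => ?_
    have : t ⁻¹' Ioi c = {α | φ α c < 0} := by
      ext α; simp only [mem_preimage, mem_Ioi, mem_ofPred_eq, ← not_le, (ht α c).2]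
    exact this ▸ isOpen_lt (hφ.comp (.prodMk_left c)) continuous_const
  · refine upperSemicontinuous_iff_isOpen_preimage.2 fun c => ?_
    have : t ⁻¹' Iio c = {α | 0 < φ α c} := by
      ext α; simp only [mem_preimage, mem_Iio, mem_ofPred_eq, ← not_le, (ht α c).1]
    exact this ▸ isOpen_lt continuous_const (hφ.comp (.prodMk_left c))

namespace CircleDeg1Lift

variable (f g : CircleDeg1Lift)

theorem hasRotNum_iff (r : ℝ) : HasRotNum f r ↔ f.translationNumber = r := by
  have key (x : ℝ) :
      Tendsto (fun n : ℕ => (f^[n] x - x) / n) atTop (𝓝 f.translationNumber) := by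
    simpa only [coe_pow] using f.tendsto_translationNumber x
  exact ⟨fun h => tendsto_nhds_unique (key 0) (h 0), fun h => h ▸ key⟩

theorem lt_translationNumber_iff (ρ : ℝ) :
    ρ < f.translationNumber ↔ ∃ n : ℕ, n * ρ + 1 < (f ^ n) 0 := by
  constructor
  · intro h
    obtain ⟨n, hn⟩ := exists_nat_gt (2 / (f.translationNumber - ρ))
    rw [div_lt_iff₀ (sub_pos.2 h)] at hn
    have := abs_le.1 (f.dist_pow_map_zero_mul_translationNumber_le n)
    exact ⟨n, by linarith⟩
  · rintro ⟨n, hn⟩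
    have := abs_le.1 (f.dist_pow_map_zero_mul_translationNumber_le n)
    exact lt_of_mul_lt_mul_left (by linarith) n.cast_nonneg

theorem translationNumber_lt_iff (ρ : ℝ) :
    f.translationNumber < ρ ↔ ∃ n : ℕ, (f ^ n) 0 + 1 < n * ρ := by
  constructor
  · intro h
    obtain ⟨n, hn⟩ := exists_nat_gt (2 / (ρ - f.translationNumber))
    rw [div_lt_iff₀ (sub_pos.2 h)] at hn
    have := abs_le.1 (f.dist_pow_map_zero_mul_translationNumber_le n)
    exact ⟨n, by linarith⟩
  · rintro ⟨n, hn⟩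
    have := abs_le.1 (f.dist_pow_map_zero_mul_translationNumber_le n)
    exact lt_of_mul_lt_mul_left (by linarith) n.cast_nonneg

theorem pow_apply_add_le {ε : ℝ} (hε : 0 ≤ ε) (h : ∀ x, f x + ε ≤ g x) {n : ℕ} (hn : 0 < n)
    (x : ℝ) : (f ^ n) x + ε ≤ (g ^ n) x := by
  induction n, hn using Nat.le_induction generalizing x with
  | base => simpa using h x
  | succ n _ ih =>
    rw [pow_succ, pow_succ, mul_apply, mul_apply]
    exact (ih (f x)).trans ((g ^ n).mono (by linarith [h x]))

theorem exists_pos_add_le (hf : Continuous f) (hg : Continuous g) (h : ∀ x, f x < g x) :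
    ∃ ε > 0, ∀ x, f x + ε ≤ g x := by
  have hper : Periodic (fun x => g x - f x) 1 := fun x => by
    simp only [map_add_one]; ring
  obtain ⟨_, ⟨x₀, rfl⟩, hmin⟩ :=
    (hper.compact_of_continuous one_ne_zero (hg.sub hf)).exists_isLeast (range_nonempty _)
  exact ⟨g x₀ - f x₀, sub_pos.2 (h x₀), fun x => by linarith [hmin ⟨x, rfl⟩]⟩

theorem translationNumber_lt_of_irrational (hf : Continuous f) (hg : Continuous g)
    (h : ∀ x, f x < g x) (hirr : Irrational f.translationNumber) :
    f.translationNumber < g.translationNumber := by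
  set ρ := f.translationNumber
  obtain ⟨ε, hε, hgap⟩ := exists_pos_add_le f g hf hg h
  refine (translationNumber_mono fun x => (h x).le).lt_of_ne fun heq => ?_
  obtain ⟨k, hk, hkε⟩ := Real.exists_nat_abs_mul_sub_round_lt ρ hε
  have hkε := abs_lt.1 hkε
  have hgap_k := pow_apply_add_le f g hε.le hgap hk
  rcases ((hirr.natCast_mul hk.ne').ne_int (round (k * ρ))).lt_or_gt with hlt | hgt
  · obtain ⟨x, hx⟩ := (f ^ k).exists_eq_add_translationNumber (f.continuous_pow hf k)
    rw [translationNumber_pow] at hx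
    have := (g ^ k).le_translationNumber_of_add_int_le (x := x) (m := round (k * ρ))
      (by linarith [hgap_k x])
    rw [translationNumber_pow, ← heq] at this
    linarith
  · obtain ⟨y, hy⟩ := (g ^ k).exists_eq_add_translationNumber (g.continuous_pow hg k)
    rw [translationNumber_pow, ← heq] at hy
    have := (f ^ k).translationNumber_le_of_le_add_int (x := y) (m := round (k * ρ))
      (by linarith [hgap_k y])
    rw [translationNumber_pow] at this
    linarith

-- `x ↦ f x - x` is `1`-periodic, so these are its extrema over all of `ℝ`.
def minDisplacement : ℝ := sInf ((fun x => f x - x) '' Icc 0 1)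

def maxDisplacement : ℝ := sSup ((fun x => f x - x) '' Icc 0 1)

variable {f g}

theorem lt_minDisplacement_iff (hf : Continuous f) (z : ℝ) :
    z < f.minDisplacement ↔ ∀ x, z < f x - x := by
  rw [minDisplacement, isCompact_Icc.lt_sInf_iff_of_continuous (f := fun x => f x - x)
    (nonempty_Icc.2 zero_le_one) (hf.sub continuous_id).continuousOn]
  exact ⟨f.forall_map_sub_of_Icc _, fun h x _ => h x⟩

theorem maxDisplacement_lt_iff (hf : Continuous f) (z : ℝ) :
    f.maxDisplacement < z ↔ ∀ x, f x - x < z := by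
  rw [maxDisplacement, isCompact_Icc.sSup_lt_iff_of_continuous (f := fun x => f x - x)
    (nonempty_Icc.2 zero_le_one) (hf.sub continuous_id).continuousOn]
  exact ⟨f.forall_map_sub_of_Icc (· < z), fun h x _ => h x⟩

theorem minDisplacement_add_le (hf : Continuous f) {ε : ℝ} (h : ∀ x, f x + ε ≤ g x) :
    f.minDisplacement + ε ≤ g.minDisplacement := by
  refine le_csInf ((nonempty_Icc.2 zero_le_one).image _) ?_
  rintro _ ⟨x, hx, rfl⟩
  have : f.minDisplacement ≤ f x - x :=
    csInf_le (isCompact_Icc.bddBelow_image (hf.sub continuous_id).continuousOn)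
      (mem_image_of_mem _ hx)
  linarith [h x]

theorem maxDisplacement_add_le (hg : Continuous g) {ε : ℝ} (h : ∀ x, f x + ε ≤ g x) :
    f.maxDisplacement + ε ≤ g.maxDisplacement := by
  rw [← le_sub_iff_add_le]
  refine csSup_le ((nonempty_Icc.2 zero_le_one).image _) ?_
  rintro _ ⟨x, hx, rfl⟩
  have : g x - x ≤ g.maxDisplacement :=
    le_csSup (isCompact_Icc.bddAbove_image (hg.sub continuous_id).continuousOn)
      (mem_image_of_mem _ hx)
  linarith [h x]

theorem minDisplacement_pow_lt (hf : Continuous f) (hg : Continuous g) (h : ∀ x, f x < g x)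
    {n : ℕ} (hn : 0 < n) : (f ^ n).minDisplacement < (g ^ n).minDisplacement := by
  obtain ⟨ε, hε, hgap⟩ := exists_pos_add_le f g hf hg h
  have := minDisplacement_add_le (f.continuous_pow hf n) (pow_apply_add_le f g hε.le hgap hn)
  linarith

theorem maxDisplacement_pow_lt (hf : Continuous f) (hg : Continuous g) (h : ∀ x, f x < g x)
    {n : ℕ} (hn : 0 < n) : (f ^ n).maxDisplacement < (g ^ n).maxDisplacement := by
  obtain ⟨ε, hε, hgap⟩ := exists_pos_add_le f g hf hg h
  have := maxDisplacement_add_le (g.continuous_pow hg n) (pow_apply_add_le f g hε.le hgap hn)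
  linarith

theorem translationNumber_le_int_iff (hf : Continuous f) (m : ℤ) :
    f.translationNumber ≤ m ↔ f.minDisplacement ≤ m := by
  refine not_iff_not.1 ?_
  simp only [not_le, lt_minDisplacement_iff hf]
  exact ⟨fun h x => by linarith [f.lt_map_of_int_lt_translationNumber h x],
    fun h => f.lt_translationNumber_of_forall_add_lt hf fun x => by linarith [h x]⟩

theorem int_le_translationNumber_iff (hf : Continuous f) (m : ℤ) :
    m ≤ f.translationNumber ↔ m ≤ f.maxDisplacement := by
  refine not_iff_not.1 ?_
  simp only [not_le, maxDisplacement_lt_iff hf]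
  exact ⟨fun h x => by linarith [f.map_lt_of_translationNumber_lt_int h x],
    fun h => f.translationNumber_lt_of_forall_lt_add hf fun x => by linarith [h x]⟩

theorem translationNumber_le_rat_iff (hf : Continuous f) (r : ℚ) :
    f.translationNumber ≤ r ↔ (f ^ r.den).minDisplacement ≤ r.num := by
  rw [← translationNumber_le_int_iff (f.continuous_pow hf _), translationNumber_pow,
    Rat.cast_def, le_div_iff₀ (by exact_mod_cast r.pos), mul_comm]

theorem rat_le_translationNumber_iff (hf : Continuous f) (r : ℚ) :
    r ≤ f.translationNumber ↔ r.num ≤ (f ^ r.den).maxDisplacement := by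
  rw [← int_le_translationNumber_iff (f.continuous_pow hf _), translationNumber_pow,
    Rat.cast_def, div_le_iff₀ (by exact_mod_cast r.pos), mul_comm]

section Family

variable {P : Type*} [TopologicalSpace P] {f : P → CircleDeg1Lift}

theorem continuous_pow_apply (hf : Continuous fun q : P × ℝ => f q.1 q.2) (n : ℕ) :
    Continuous fun q : P × ℝ => (f q.1 ^ n) q.2 := by
  induction n with
  | zero => simpa using continuous_snd
  | succ n ih =>
    simp only [pow_succ, mul_apply]
    exact ih.comp (continuous_fst.prodMk hf)

theorem continuous_translationNumber (hf : Continuous fun q : P × ℝ => f q.1 q.2) :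
    Continuous fun p => (f p).translationNumber := by
  have hpow (n : ℕ) : Continuous fun p => (f p ^ n) 0 :=
    (continuous_pow_apply hf n).comp (.prodMk_left 0)
  refine continuous_iff_lower_upperSemicontinuous.2
    ⟨lowerSemicontinuous_iff_isOpen_preimage.2 fun ρ => ?_,
      upperSemicontinuous_iff_isOpen_preimage.2 fun ρ => ?_⟩
  · have : (fun p => (f p).translationNumber) ⁻¹' Ioi ρ =
        ⋃ n : ℕ, {p | n * ρ + 1 < (f p ^ n) 0} := by
      ext p
      simp only [mem_preimage, mem_Ioi, mem_iUnion, mem_ofPred_eq, lt_translationNumber_iff]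
    exact this ▸ isOpen_iUnion fun n => isOpen_lt continuous_const (hpow n)
  · have : (fun p => (f p).translationNumber) ⁻¹' Iio ρ =
        ⋃ n : ℕ, {p | (f p ^ n) 0 + 1 < n * ρ} := by
      ext p
      simp only [mem_preimage, mem_Iio, mem_iUnion, mem_ofPred_eq, translationNumber_lt_iff]
    exact this ▸ isOpen_iUnion fun n =>
      isOpen_lt ((hpow n).add continuous_const) continuous_const

theorem continuous_minDisplacement (hf : Continuous fun q : P × ℝ => f q.1 q.2) :
    Continuous fun p => (f p).minDisplacement :=
  isCompact_Icc.continuous_sInf (f := fun p x => f p x - x) (hf.sub continuous_snd)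

theorem continuous_maxDisplacement (hf : Continuous fun q : P × ℝ => f q.1 q.2) :
    Continuous fun p => (f p).maxDisplacement :=
  isCompact_Icc.continuous_sSup (f := fun p x => f p x - x) (hf.sub continuous_snd)

end Family

theorem exists_translationNumber_lt {F : ℝ → CircleDeg1Lift}
    (hbot : Tendsto (fun τ => F τ 0) atBot atBot) (ρ : ℝ) :
    ∃ τ, (F τ).translationNumber < ρ := by
  obtain ⟨τ, hτ⟩ := (hbot.eventually_lt_atBot (ρ - 1)).exists
  exact ⟨τ, by linarith [(abs_le.1 (F τ).dist_map_zero_translationNumber_le).1]⟩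

theorem exists_lt_translationNumber {F : ℝ → CircleDeg1Lift}
    (htop : Tendsto (fun τ => F τ 0) atTop atTop) (ρ : ℝ) :
    ∃ τ, ρ < (F τ).translationNumber := by
  obtain ⟨τ, hτ⟩ := (htop.eventually_gt_atTop (ρ + 1)).exists
  exact ⟨τ, by linarith [(abs_le.1 (F τ).dist_map_zero_translationNumber_le).2]⟩

section TwistFamily

variable {X : Type*} [TopologicalSpace X] {F : X → ℝ → CircleDeg1Lift}

theorem exists_continuous_boundary_of_irrational
    (hF : Continuous fun q : (X × ℝ) × ℝ => F q.1.1 q.1.2 q.2)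
    (htwist : ∀ α x, StrictMono fun τ => F α τ x)
    (hbot : ∀ α, Tendsto (fun τ => F α τ 0) atBot atBot)
    (htop : ∀ α, Tendsto (fun τ => F α τ 0) atTop atTop) {ρ : ℝ} (hρ : Irrational ρ) :
    ∃ t : X → ℝ, Continuous t ∧ ∀ α τ, ((F α τ).translationNumber ≤ ρ ↔ τ ≤ t α) ∧
      (ρ ≤ (F α τ).translationNumber ↔ t α ≤ τ) := by
  have hlt {α s t} (h : s < t) (hs : (F α s).translationNumber = ρ) :
      (F α s).translationNumber < (F α t).translationNumber :=
    translationNumber_lt_of_irrational _ _ (hF.comp (.prodMk_right (α, s)))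
      (hF.comp (.prodMk_right (α, t))) (fun x => htwist α x h) (hs ▸ hρ)
  obtain ⟨t, ht, h⟩ := exists_continuous_nonpos_iff_le
    (φ := fun α τ => (F α τ).translationNumber - ρ)
    ((continuous_translationNumber hF).sub continuous_const)
    (fun α s t h => sub_le_sub_right (translationNumber_mono fun x => (htwist α x).monotone h) ρ)
    (fun α s t hs ht => by
      rw [sub_eq_zero] at hs ht
      by_contra hne
      rcases lt_or_gt_of_ne hne with h | h
      · exact (hlt h hs).ne (hs.trans ht.symm)
      · exact (hlt h ht).ne (ht.trans hs.symm))
    (fun α => (exists_translationNumber_lt (hbot α) ρ).imp fun τ h => sub_nonpos.2 h.le)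
    (fun α => (exists_lt_translationNumber (htop α) ρ).imp fun τ h => sub_nonneg.2 h.le)
  exact ⟨t, ht, fun α τ => ⟨sub_nonpos.symm.trans (h α τ).1, sub_nonneg.symm.trans (h α τ).2⟩⟩

theorem exists_continuous_translationNumber_le_iff
    (hF : Continuous fun q : (X × ℝ) × ℝ => F q.1.1 q.1.2 q.2)
    (htwist : ∀ α x, StrictMono fun τ => F α τ x)
    (hbot : ∀ α, Tendsto (fun τ => F α τ 0) atBot atBot)
    (htop : ∀ α, Tendsto (fun τ => F α τ 0) atTop atTop) (ρ : ℝ) :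
    ∃ t : X → ℝ, Continuous t ∧ ∀ α τ, (F α τ).translationNumber ≤ ρ ↔ τ ≤ t α := by
  by_cases hρ : Irrational ρ
  · obtain ⟨t, ht, h⟩ := exists_continuous_boundary_of_irrational hF htwist hbot htop hρ
    exact ⟨t, ht, fun α τ => (h α τ).1⟩
  obtain ⟨r, rfl⟩ := not_not.1 hρ
  set φ : X → ℝ → ℝ := fun α τ => (F α τ ^ r.den).minDisplacement - r.num
  have hFc (α τ) : Continuous (F α τ) := hF.comp (.prodMk_right (α, τ))
  have hφ (α τ) : (F α τ).translationNumber ≤ r ↔ φ α τ ≤ 0 :=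
    (translationNumber_le_rat_iff (hFc α τ) r).trans sub_nonpos.symm
  have hmono (α) : StrictMono (φ α) := fun s t h => sub_lt_sub_right
    (minDisplacement_pow_lt (hFc α s) (hFc α t) (fun x => htwist α x h) r.pos) _
  obtain ⟨t, ht, h⟩ := exists_continuous_nonpos_iff_le
    ((continuous_minDisplacement
      (continuous_pow_apply (f := fun p : X × ℝ => F p.1 p.2) hF r.den)).sub continuous_const)
    (fun α => (hmono α).monotone) (fun α s t hs ht => (hmono α).injective (hs.trans ht.symm))
    (fun α => (exists_translationNumber_lt (hbot α) r).imp fun τ h => (hφ α τ).1 h.le)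
    (fun α => (exists_lt_translationNumber (htop α) r).imp fun τ h =>
      (not_le.1 ((hφ α τ).not.1 h.not_ge)).le)
  exact ⟨t, ht, fun α τ => (hφ α τ).trans (h α τ).1⟩

theorem exists_continuous_le_translationNumber_iff
    (hF : Continuous fun q : (X × ℝ) × ℝ => F q.1.1 q.1.2 q.2)
    (htwist : ∀ α x, StrictMono fun τ => F α τ x)
    (hbot : ∀ α, Tendsto (fun τ => F α τ 0) atBot atBot)
    (htop : ∀ α, Tendsto (fun τ => F α τ 0) atTop atTop) (ρ : ℝ) :
    ∃ t : X → ℝ, Continuous t ∧ ∀ α τ, ρ ≤ (F α τ).translationNumber ↔ t α ≤ τ := by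
  by_cases hρ : Irrational ρ
  · obtain ⟨t, ht, h⟩ := exists_continuous_boundary_of_irrational hF htwist hbot htop hρ
    exact ⟨t, ht, fun α τ => (h α τ).2⟩
  obtain ⟨r, rfl⟩ := not_not.1 hρ
  set φ : X → ℝ → ℝ := fun α τ => (F α τ ^ r.den).maxDisplacement - r.num
  have hFc (α τ) : Continuous (F α τ) := hF.comp (.prodMk_right (α, τ))
  have hφ (α τ) : r ≤ (F α τ).translationNumber ↔ 0 ≤ φ α τ :=
    (rat_le_translationNumber_iff (hFc α τ) r).trans sub_nonneg.symm
  have hmono (α) : StrictMono (φ α) := fun s t h => sub_lt_sub_right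
    (maxDisplacement_pow_lt (hFc α s) (hFc α t) (fun x => htwist α x h) r.pos) _
  obtain ⟨t, ht, h⟩ := exists_continuous_nonpos_iff_le
    ((continuous_maxDisplacement
      (continuous_pow_apply (f := fun p : X × ℝ => F p.1 p.2) hF r.den)).sub continuous_const)
    (fun α => (hmono α).monotone) (fun α s t hs ht => (hmono α).injective (hs.trans ht.symm))
    (fun α => (exists_translationNumber_lt (hbot α) r).imp fun τ h =>
      (not_le.1 ((hφ α τ).not.1 h.not_ge)).le)
    (fun α => (exists_lt_translationNumber (htop α) r).imp fun τ h => (hφ α τ).1 h.le)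
  exact ⟨t, ht, fun α τ => (hφ α τ).trans (h α τ).2⟩

end TwistFamily

end CircleDeg1Lift

theorem arnold_tongue_boundaries_general (𝔄 : Type*) [TopologicalSpace 𝔄]
    (G : 𝔄 → ℝ → ℝ → ℝ)
    (hcont : Continuous fun p : 𝔄 × ℝ × ℝ => G p.1 p.2.1 p.2.2)
    (hmono : ∀ α τ, StrictMono (G α τ))
    (hcomm : ∀ α τ x, G α τ (x + 1) = G α τ x + 1)
    (htwist : ∀ α x, StrictMono fun τ => G α τ x)
    (htop : ∀ α x, Tendsto (fun τ => G α τ x) atTop atTop)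
    (hbot : ∀ α x, Tendsto (fun τ => G α τ x) atBot atBot)
    (ρ₀ : ℝ) :
    ∃ τm τp : 𝔄 → ℝ, Continuous τm ∧ Continuous τp ∧
      {p : 𝔄 × ℝ | HasRotNum (G p.1 p.2) ρ₀} =
        {p : 𝔄 × ℝ | τm p.1 ≤ p.2 ∧ p.2 ≤ τp p.1} := by
  let F : 𝔄 → ℝ → CircleDeg1Lift := fun α τ => ⟨⟨G α τ, (hmono α τ).monotone⟩, hcomm α τ⟩
  have hF : Continuous fun q : (𝔄 × ℝ) × ℝ => F q.1.1 q.1.2 q.2 :=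
    hcont.comp (Homeomorph.prodAssoc 𝔄 ℝ ℝ).continuous
  obtain ⟨τm, hτm, hm⟩ := CircleDeg1Lift.exists_continuous_le_translationNumber_iff hF htwist
    (fun α => hbot α 0) (fun α => htop α 0) ρ₀
  obtain ⟨τp, hτp, hp⟩ := CircleDeg1Lift.exists_continuous_translationNumber_le_iff hF htwist
    (fun α => hbot α 0) (fun α => htop α 0) ρ₀
  refine ⟨τm, τp, hτm, hτp, Set.ext fun p => ?_⟩
  change HasRotNum (F p.1 p.2) ρ₀ ↔ τm p.1 ≤ p.2 ∧ p.2 ≤ τp p.1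
  rw [CircleDeg1Lift.hasRotNum_iff, le_antisymm_iff, hp, hm, and_comm]

/-- **Lemma 2.1** (continuity of the boundaries of Arnold tongues). For a compact space `𝔄`
and a continuous two-parameter family of lifts `G_{α,τ}` of orientation-preserving circle
homeomorphisms, strictly increasing in `τ` (twist condition) and unbounded in `τ`, the
`ρ`-level set of the rotation number is bounded by two continuous functions `τ_ρ⁻ ≤ τ_ρ⁺`. -/
theorem arnold_tongue_boundaries (𝔄 : Type*) [TopologicalSpace 𝔄] [CompactSpace 𝔄]
    (G : 𝔄 → ℝ → ℝ → ℝ)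
    (hcont : Continuous fun p : 𝔄 × ℝ × ℝ => G p.1 p.2.1 p.2.2)
    (hmono : ∀ α τ, StrictMono (G α τ))
    (hcomm : ∀ α τ x, G α τ (x + 1) = G α τ x + 1)
    (htwist : ∀ α x, StrictMono fun τ => G α τ x)
    (htop : ∀ α x, Tendsto (fun τ => G α τ x) atTop atTop)
    (hbot : ∀ α x, Tendsto (fun τ => G α τ x) atBot atBot)
    (ρ₀ : ℝ) :
    ∃ τm τp : 𝔄 → ℝ, Continuous τm ∧ Continuous τp ∧
      {p : 𝔄 × ℝ | HasRotNum (G p.1 p.2) ρ₀} =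
        {p : 𝔄 × ℝ | τm p.1 ≤ p.2 ∧ p.2 ≤ τp p.1} :=
  arnold_tongue_boundaries_general 𝔄 G hcont hmono hcomm htwist htop hbot ρ₀
end
end

section
/- Let A and B be Baire spaces with B second-countable, and let U ⊆ A × B be a residual set (respectively, an open and dense set). Then there exists a residual set V ⊆ A such that for every v ∈ V there exists a residual (respectively, open and dense) set U_v ⊆ B with {v} × U_v ⊆ U. -/
open Set TopologicalSpace

/-- Open-dense case: the set of points whose slice is open and dense is residual. -/
lemma baire_product_slices_aux {A B : Type*} [TopologicalSpace A] [TopologicalSpace B]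
    [SecondCountableTopology B] (U : Set (A × B)) (hU : IsOpen U) (hD : Dense U) :
    ∃ V ∈ residual A, ∀ a ∈ V, IsOpen {b | (a, b) ∈ U} ∧ Dense {b | (a, b) ∈ U} := by
  set S := countableBasis B with hS
  refine ⟨⋂ s ∈ S, {a | ∃ b ∈ s, (a, b) ∈ U}, ?_, ?_⟩
  · refine (countable_bInter_mem (countable_countableBasis B)).2 fun s hs => ?_
    refine residual_of_dense_open ?_ ?_
    · have : {a | ∃ b ∈ s, (a, b) ∈ U} = Prod.fst '' (U ∩ univ ×ˢ s) := by
        ext a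
        simp only [mem_setOf_eq, mem_image, mem_inter_iff, mem_prod, mem_univ, true_and,
          Prod.exists]
        constructor
        · rintro ⟨b, hb, hab⟩; exact ⟨a, b, ⟨hab, hb⟩, rfl⟩
        · rintro ⟨a', b, ⟨hab, hb⟩, rfl⟩; exact ⟨b, hb, hab⟩
      rw [this]
      exact isOpenMap_fst _ (hU.inter (isOpen_univ.prod (isOpen_of_mem_countableBasis hs)))
    · rw [dense_iff_inter_open]
      intro W hW hWne
      obtain ⟨b0, hb0⟩ := nonempty_of_mem_countableBasis hs
      have hprod : (W ×ˢ s).Nonempty := hWne.prod ⟨b0, hb0⟩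
      obtain ⟨⟨a, b⟩, ⟨⟨ha, hb⟩, hab⟩⟩ :=
        hD.inter_open_nonempty _ (hW.prod (isOpen_of_mem_countableBasis hs)) hprod
      exact ⟨a, ha, b, hb, hab⟩
  · intro a ha
    refine ⟨hU.preimage (Continuous.prodMk_right a), ?_⟩
    rw [(isBasis_countableBasis B).dense_iff]
    intro o ho _
    simp only [mem_iInter, mem_setOf_eq] at ha
    obtain ⟨b, hb, hab⟩ := ha o ho
    exact ⟨b, hb, hab⟩

/-- **Lemma 5.1.** If `A, B` are Baire spaces, `B` is second-countable, and `U ⊆ A × B` is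
residual (resp. open and dense), then there is a residual set `V ⊆ A` such that for every
`v ∈ V` there is a residual (resp. open and dense) set `U_v ⊆ B` with `{v} × U_v ⊆ U`. -/
theorem baire_product_slices (A B : Type*) [TopologicalSpace A] [TopologicalSpace B]
    [BaireSpace A] [BaireSpace B] [SecondCountableTopology B] (U : Set (A × B)) :
    (U ∈ residual (A × B) →
      ∃ V ∈ residual A, ∀ v ∈ V, ∃ Uv ∈ residual B, {v} ×ˢ Uv ⊆ U) ∧
    (IsOpen U → Dense U →
      ∃ V ∈ residual A, ∀ v ∈ V, ∃ Uv : Set B, IsOpen Uv ∧ Dense Uv ∧ {v} ×ˢ Uv ⊆ U) := by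
  constructor
  · intro hU
    obtain ⟨S, hSo, hSd, hSc, hSsub⟩ := mem_residual_iff.1 hU
    have := hSc.to_subtype
    choose W hWres hWprop using fun s : S =>
      baire_product_slices_aux (s : Set (A × B)) (hSo s s.2) (hSd s s.2)
    refine ⟨⋂ s : S, W s, countable_iInter_mem.2 hWres, fun a ha => ?_⟩
    simp only [mem_iInter] at ha
    refine ⟨⋂ s : S, {b | (a, b) ∈ (s : Set (A × B))}, countable_iInter_mem.2 fun s =>
      residual_of_dense_open (hWprop s a (ha s)).1 (hWprop s a (ha s)).2, ?_⟩
    rintro ⟨a', b⟩ ⟨rfl : a' = a, hb⟩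
    simp only [mem_iInter, mem_setOf_eq] at hb
    exact hSsub fun s hs => hb ⟨s, hs⟩
  · intro hUo hUd
    obtain ⟨V, hV, hprop⟩ := baire_product_slices_aux U hUo hUd
    refine ⟨V, hV, fun a ha => ⟨_, (hprop a ha).1, (hprop a ha).2, ?_⟩⟩
    rintro ⟨a', b⟩ ⟨rfl : a' = a, hb⟩
    exact hb
end
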